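/- Let n ≥ 2. The map ℒ : ℝ^{2^{n-1}} × ℝ^{2^{n-1}} → ℝ^{2^n} defined by ℒ(ᾱ, β) = α, where α_{2i−1} = ᾱ_i + (β r_n)_i and α_{2i} = ᾱ_i − (β r_n)_i for 1 ≤ i ≤ 2^{n-1} (β r_n denoting the row vector β multiplied by the matrix r_n), is a linear bijection, with inverse given by ᾱ_i = (α_{2i−1} + α_{2i})/2 and β = (1/2^{n-1}) · γ · r_n^T, where γ_i = (α_{2i−1} − α_{2i})/2. -/

import Mathlib

open Matrix

noncomputable section

/-- Kronecker product of square matrices with flat `Fin` indexing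
(first factor most significant: `(A ⊗ B)[i*b+r, j*b+s] = A[i,j] * B[r,s]`). -/
def kron {R : Type*} [Mul R] {a b : ℕ} (A : Matrix (Fin a) (Fin a) R)
    (B : Matrix (Fin b) (Fin b) R) : Matrix (Fin (a * b)) (Fin (a * b)) R := fun i j =>
  have hb : 0 < b := Nat.pos_of_ne_zero fun hb0 => by
    subst hb0; exact absurd i.isLt (by omega)
  A ⟨i.val / b, Nat.div_lt_of_lt_mul (Nat.mul_comm a b ▸ i.isLt)⟩
    ⟨j.val / b, Nat.div_lt_of_lt_mul (Nat.mul_comm a b ▸ j.isLt)⟩ *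
  B ⟨i.val % b, Nat.mod_lt _ hb⟩ ⟨j.val % b, Nat.mod_lt _ hb⟩

/-- Kronecker product of (column) vectors with flat `Fin` indexing. -/
def kronV {R : Type*} [Mul R] {a b : ℕ} (u : Fin a → R) (v : Fin b → R) :
    Fin (a * b) → R := fun i =>
  have hb : 0 < b := Nat.pos_of_ne_zero fun hb0 => by
    subst hb0; exact absurd i.isLt (by omega)
  u ⟨i.val / b, Nat.div_lt_of_lt_mul (Nat.mul_comm a b ▸ i.isLt)⟩ *
  v ⟨i.val % b, Nat.mod_lt _ hb⟩

/-- Transport a square matrix along an equality of sizes. -/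
def castM {R : Type*} {a b : ℕ} (h : a = b) (A : Matrix (Fin a) (Fin a) R) :
    Matrix (Fin b) (Fin b) R := fun i j => A (Fin.cast h.symm i) (Fin.cast h.symm j)

/-- Transport a vector along an equality of sizes. -/
def castV {R : Type*} {a b : ℕ} (h : a = b) (u : Fin a → R) : Fin b → R :=
  fun i => u (Fin.cast h.symm i)

theorem two_pow_pred_mul_two {n : ℕ} (hn : 1 ≤ n) : 2 ^ (n - 1) * 2 = 2 ^ n := by
  rw [← pow_succ]; congr 1; omega

theorem half_lt {n x : ℕ} (hx : x < 2 ^ n) : x / 2 < 2 ^ (n - 1) := by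
  rcases Nat.eq_zero_or_pos n with h | h
  · subst h; simp only [pow_zero] at hx ⊢; omega
  · have h2 : (2 : ℕ) ^ (n - 1) * 2 = 2 ^ n := two_pow_pred_mul_two h
    omega

/-- `⌊j/2⌋` as an element of `Fin (2^(n-1))`. -/
def half {n : ℕ} (j : Fin (2 ^ n)) : Fin (2 ^ (n - 1)) := ⟨j.val / 2, half_lt j.isLt⟩

/-- The index `2i` (1-indexed: `2i-1`). -/
def dbl {n : ℕ} (hn : 1 ≤ n) (i : Fin (2 ^ (n - 1))) : Fin (2 ^ n) :=
  ⟨2 * i.val, by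
    have h1 := i.isLt
    have h2 : (2 : ℕ) ^ (n - 1) * 2 = 2 ^ n := two_pow_pred_mul_two hn
    omega⟩

/-- The index `2i+1` (1-indexed: `2i`). -/
def dbl1 {n : ℕ} (hn : 1 ≤ n) (i : Fin (2 ^ (n - 1))) : Fin (2 ^ n) :=
  ⟨2 * i.val + 1, by
    have h1 := i.isLt
    have h2 : (2 : ℕ) ^ (n - 1) * 2 = 2 ^ n := two_pow_pred_mul_two hn
    omega⟩

/-- The identity matrix `I_m` over `ℂ`. -/
def idM (m : ℕ) : Matrix (Fin m) (Fin m) ℂ := 1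

/-- The 2×2 identity matrix `I_2`. -/
def I2 : Matrix (Fin 2) (Fin 2) ℂ := 1

/-- The Pauli matrix `X = [[0,1],[1,0]]`. -/
def pauliX : Matrix (Fin 2) (Fin 2) ℂ := !![0, 1; 1, 0]

/-- The projector `π₀ = [[1,0],[0,0]]`. -/
def proj0 : Matrix (Fin 2) (Fin 2) ℂ := !![1, 0; 0, 0]

/-- The projector `π₁ = [[0,0],[0,1]]`. -/
def proj1 : Matrix (Fin 2) (Fin 2) ℂ := !![0, 0; 0, 1]

/-- `D₁(φ) = diag(e^{iφ}, e^{-iφ})`. -/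
def D1 (φ : ℝ) : Matrix (Fin 2) (Fin 2) ℂ :=
  !![Complex.exp (Complex.I * (φ : ℂ)), 0; 0, Complex.exp (-(Complex.I * (φ : ℂ)))]

/-- `D_m(α) = diag(e^{iα₁}, …, e^{iα_{2^m}})`. -/
def Dm (m : ℕ) (α : Fin (2 ^ m) → ℝ) : Matrix (Fin (2 ^ m)) (Fin (2 ^ m)) ℂ :=
  Matrix.diagonal fun j => Complex.exp (Complex.I * (α j : ℂ))

/-- The control matrix
`L(k) = I^{⊗(k-1)} ⊗ π₀ ⊗ I^{⊗(n-k)} + I^{⊗(k-1)} ⊗ π₁ ⊗ I^{⊗(n-k-1)} ⊗ X`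
(defined to be the identity for `k` outside `{1,…,n-1}`). -/
def Lmat (n k : ℕ) : Matrix (Fin (2 ^ n)) (Fin (2 ^ n)) ℂ :=
  if h : 1 ≤ k ∧ k < n then
    castM (by rw [← pow_succ, ← pow_add]; congr 1; omega)
      (kron (kron (idM (2 ^ (k - 1))) proj0) (idM (2 ^ (n - k)))) +
    castM (by rw [← pow_succ, ← pow_add, ← pow_succ]; congr 1; omega)
      (kron (kron (kron (idM (2 ^ (k - 1))) proj1) (idM (2 ^ (n - k - 1)))) pauliX)
  else 1

/-- The half of the binary-tree sequence: `a_2 = (1)`,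
`a_m = (a_{m-1}+1) ∘ (1) ∘ (a_{m-1}+1)`. -/
def aSeq : ℕ → List ℕ
  | 0 => []
  | 1 => []
  | 2 => [1]
  | n + 3 => ((aSeq (n + 2)).map (· + 1)) ++ [1] ++ ((aSeq (n + 2)).map (· + 1))

/-- The binary-tree sequence `A_n = a_n ∘ (1)`. -/
def ASeq (n : ℕ) : List ℕ := aSeq n ++ [1]

/-- The all-ones vector `[1,1]^{⊗k}` (of arbitrary length). -/
def onesV (m : ℕ) : Fin m → ℝ := fun _ => 1

/-- The vector `[1,-1]`. -/
def signV : Fin 2 → ℝ := ![1, -1]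

/-- `v_m = [1,1]^{⊗(m-1)} ⊗ [1,-1] ⊗ [1,1]^{⊗(n-1-m)}`
(defined to be all-ones for `m` outside `{1,…,n-1}`). -/
def vvec (n m : ℕ) : Fin (2 ^ (n - 1)) → ℝ :=
  if h : 1 ≤ m ∧ m ≤ n - 1 then
    castV (by rw [← pow_succ, ← pow_add]; congr 1; omega)
      (kronV (kronV (onesV (2 ^ (m - 1))) signV) (onesV (2 ^ (n - 1 - m))))
  else onesV _

/-- The matrix `r_n`: its `i`-th column is the entrywise product
`∏_{k=1}^{i-1} v_{A_n(k)}`.  (`rMat n j i` is the `(j,i)` entry, `i` the column.) -/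
def rMat (n : ℕ) : Matrix (Fin (2 ^ (n - 1))) (Fin (2 ^ (n - 1))) ℝ :=
  fun j i => ∏ k ∈ Finset.range i.val, vvec n ((ASeq n).getD k 1) j

/-- `r_2 = [[1,1],[1,-1]]`. -/
def r2 : Matrix (Fin 2) (Fin 2) ℝ := !![1, 1; 1, -1]

/-- The `m`-fold Kronecker power `r_2^{⊗m}`. -/
def r2pow : (m : ℕ) → Matrix (Fin (2 ^ m)) (Fin (2 ^ m)) ℝ
  | 0 => 1
  | m + 1 => castM (pow_succ 2 m).symm (kron (r2pow m) r2)

/-- The block-diagonal matrix with 2×2 blocks `D₁(γ₁), …, D₁(γ_{2^{n-1}})`. -/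
def blockD1 (n : ℕ) (γ : Fin (2 ^ (n - 1)) → ℝ) :
    Matrix (Fin (2 ^ n)) (Fin (2 ^ n)) ℂ := fun x y =>
  if x.val / 2 = y.val / 2 then
    D1 (γ (half x)) ⟨x.val % 2, Nat.mod_lt _ (by norm_num)⟩
      ⟨y.val % 2, Nat.mod_lt _ (by norm_num)⟩
  else 0

/-!
Read `v_m` as the sign `j ↦ (-1)^{bit_{n-1-m} j}`; then `a_n` lists, from the top bit down, the
bits flipped by the reflected Gray code on `b = n - 1` bits, and the columns of `r_n` are Walsh
characters. Let `R_b` be the matrix of these characters on `b` bits, so `r_n = R_{n-1}`.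
Splitting rows and columns by the top bit, the recursion for `a_n` gives the block form
`R_{b+1} = [[R_b, D R_b], [R_b, -D R_b]]` with `D` a diagonal `±1` matrix, so inductively
`R_bᵀ R_b = 2^b I`. With `r_n` orthogonal up to the factor `2^{n-1}`, `ℒ` interleaves `ᾱ ± β r_n`
and is undone by half-sums and half-differences.
-/

lemma sum_range_two_pow_succ {M : Type*} [AddCommMonoid M] (b : ℕ) (f : ℕ → M) :
    ∑ j ∈ Finset.range (2 ^ (b + 1)), f j =
      ∑ j ∈ Finset.range (2 ^ b), (f j + f (2 ^ b + j)) := by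
  rw [pow_succ, mul_two, Finset.sum_range_add, Finset.sum_add_distrib]

lemma prod_range_getD_eq_prod_take {α M : Type*} [CommMonoid M] (f : α → M) (l : List α) (d : α)
    {i : ℕ} (hi : i ≤ l.length) :
    ∏ k ∈ Finset.range i, f (l.getD k d) = ((l.take i).map f).prod := by
  induction i with
  | zero => simp
  | succ i ih =>
    rw [Finset.prod_range_succ, ih (by omega), List.take_add_one, List.map_append, List.prod_append,
      List.getD_eq_getElem _ _ (by omega), List.getElem?_eq_getElem (by omega)]
    simp

lemma mul_transpose_eq_smul_one {ι K : Type*} [Fintype ι] [DecidableEq ι] [Field K]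
    {R : Matrix ι ι K} {c : K} (hc : c ≠ 0) (hR : Rᵀ * R = c • 1) : R * Rᵀ = c • 1 := by
  have hinv : (c⁻¹ • Rᵀ) * R = 1 := by rw [smul_mul, hR, smul_smul, inv_mul_cancel₀ hc, one_smul]
  calc R * Rᵀ
      = c • (R * (c⁻¹ • Rᵀ)) := by rw [Matrix.mul_smul, smul_smul, mul_inv_cancel₀ hc, one_smul]
    _ = c • 1 := by rw [mul_eq_one_comm.mp hinv]

def bitSign (e j : ℕ) : ℝ := (-1) ^ (j / 2 ^ e)

def walsh (l : List ℕ) (j : ℕ) : ℝ := (l.map fun e => bitSign e j).prod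

def grayFlips : ℕ → List ℕ
  | 0 => []
  | b + 1 => grayFlips b ++ b :: grayFlips b

lemma bitSign_mul_self (e j : ℕ) : bitSign e j * bitSign e j = 1 := by
  rw [bitSign, ← mul_pow, neg_one_mul, neg_neg, one_pow]

lemma bitSign_two_pow_add {e b : ℕ} (he : e < b) (j : ℕ) :
    bitSign e (2 ^ b + j) = bitSign e j := by
  obtain ⟨d, rfl⟩ := Nat.exists_eq_add_of_lt he
  have hsplit : 2 ^ (e + d + 1) + j = 2 ^ e * (2 * 2 ^ d) + j := by ring
  rw [bitSign, bitSign, hsplit, Nat.mul_add_div (by positivity), pow_add, pow_mul,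
    neg_one_sq, one_pow, one_mul]

lemma bitSign_of_lt {b j : ℕ} (hj : j < 2 ^ b) : bitSign b j = 1 := by
  rw [bitSign, Nat.div_eq_of_lt hj, pow_zero]

lemma bitSign_two_pow_add_of_lt {b j : ℕ} (hj : j < 2 ^ b) : bitSign b (2 ^ b + j) = -1 := by
  rw [bitSign, add_comm, Nat.add_div_right _ (by positivity), Nat.div_eq_of_lt hj, zero_add,
    pow_one]

lemma walsh_append (l l' : List ℕ) (j : ℕ) : walsh (l ++ l') j = walsh l j * walsh l' j := by
  simp only [walsh, List.map_append, List.prod_append]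

lemma walsh_cons (e : ℕ) (l : List ℕ) (j : ℕ) : walsh (e :: l) j = bitSign e j * walsh l j := by
  simp only [walsh, List.map_cons, List.prod_cons]

lemma walsh_mul_self (l : List ℕ) (j : ℕ) : walsh l j * walsh l j = 1 := by
  induction l with
  | nil => simp [walsh]
  | cons e l ih =>
    rw [walsh_cons, mul_mul_mul_comm, bitSign_mul_self, ih, one_mul]

lemma walsh_two_pow_add {l : List ℕ} {b : ℕ} (hl : ∀ e ∈ l, e < b) (j : ℕ) :
    walsh l (2 ^ b + j) = walsh l j := by
  simp only [walsh]
  congr 1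
  exact List.map_congr_left fun e he => bitSign_two_pow_add (hl e he) j

lemma length_grayFlips (b : ℕ) : (grayFlips b).length = 2 ^ b - 1 := by
  induction b with
  | zero => rfl
  | succ b ih =>
    have := Nat.one_le_two_pow (n := b)
    simp only [grayFlips, List.length_append, List.length_cons, ih, pow_succ]
    omega

lemma lt_of_mem_grayFlips {b e : ℕ} (he : e ∈ grayFlips b) : e < b := by
  induction b with
  | zero => simp [grayFlips] at he
  | succ b ih =>
    simp only [grayFlips, List.mem_append, List.mem_cons] at he
    rcases he with he | rfl | he <;> grind

lemma take_grayFlips_succ_of_lt {b i : ℕ} (hi : i < 2 ^ b) :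
    (grayFlips (b + 1)).take i = (grayFlips b).take i := by
  rw [grayFlips, List.take_append_of_le_length (by rw [length_grayFlips]; omega)]

lemma take_grayFlips_succ_two_pow_add (b i : ℕ) :
    (grayFlips (b + 1)).take (2 ^ b + i) = grayFlips b ++ b :: (grayFlips b).take i := by
  have := Nat.one_le_two_pow (n := b)
  rw [grayFlips, List.take_append, List.take_of_length_le (by rw [length_grayFlips]; omega),
    length_grayFlips, show 2 ^ b + i - (2 ^ b - 1) = i + 1 by omega, List.take_succ_cons]

def grayWalsh (b i j : ℕ) : ℝ := walsh ((grayFlips b).take i) j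

lemma grayWalsh_two_pow_add_right (b i j : ℕ) : grayWalsh b i (2 ^ b + j) = grayWalsh b i j :=
  walsh_two_pow_add (fun _ he => lt_of_mem_grayFlips (List.mem_of_mem_take he)) j

lemma grayWalsh_succ_of_lt {b i : ℕ} (hi : i < 2 ^ b) (j : ℕ) :
    grayWalsh (b + 1) i j = grayWalsh b i j := by
  rw [grayWalsh, take_grayFlips_succ_of_lt hi, grayWalsh]

lemma grayWalsh_succ_two_pow_add (b i j : ℕ) :
    grayWalsh (b + 1) (2 ^ b + i) j = walsh (grayFlips b) j * bitSign b j * grayWalsh b i j := by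
  rw [grayWalsh, take_grayFlips_succ_two_pow_add, walsh_append, walsh_cons, grayWalsh, mul_assoc]

lemma grayWalsh_succ_two_pow_add_mul (b i i' j : ℕ) :
    grayWalsh (b + 1) (2 ^ b + i) j * grayWalsh (b + 1) (2 ^ b + i') j =
      grayWalsh b i j * grayWalsh b i' j := by
  simp only [grayWalsh_succ_two_pow_add]
  linear_combination (grayWalsh b i j * grayWalsh b i' j) *
    (bitSign b j ^ 2 * walsh_mul_self (grayFlips b) j + bitSign_mul_self b j)

lemma grayWalsh_succ_two_pow_add_two_pow_add {b j : ℕ} (hj : j < 2 ^ b) (i : ℕ) :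
    grayWalsh (b + 1) (2 ^ b + i) (2 ^ b + j) = -grayWalsh (b + 1) (2 ^ b + i) j := by
  simp only [grayWalsh_succ_two_pow_add, walsh_two_pow_add (fun _ => lt_of_mem_grayFlips),
    grayWalsh_two_pow_add_right, bitSign_two_pow_add_of_lt hj, bitSign_of_lt hj]
  ring

theorem sum_grayWalsh_mul {b i i' : ℕ} (hi : i < 2 ^ b) (hi' : i' < 2 ^ b) :
    ∑ j ∈ Finset.range (2 ^ b), grayWalsh b i j * grayWalsh b i' j =
      if i = i' then 2 ^ b else 0 := by
  induction b generalizing i i' with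
  | zero =>
    obtain rfl : i = 0 := by simpa using hi
    obtain rfl : i' = 0 := by simpa using hi'
    simp [grayWalsh, walsh]
  | succ b ih =>
    rw [pow_succ] at hi hi'
    rw [sum_range_two_pow_succ]
    rcases lt_or_ge i (2 ^ b) with hlo | hhi <;> rcases lt_or_ge i' (2 ^ b) with hlo' | hhi'
    · simp only [grayWalsh_succ_of_lt hlo, grayWalsh_succ_of_lt hlo', grayWalsh_two_pow_add_right,
        ← two_mul, ← Finset.mul_sum, ih hlo hlo']
      split_ifs <;> ring
    · obtain ⟨i', rfl⟩ := Nat.exists_eq_add_of_le hhi'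
      rw [if_neg (by omega)]
      refine Finset.sum_eq_zero fun j hj => ?_
      rw [grayWalsh_succ_two_pow_add_two_pow_add (Finset.mem_range.mp hj),
        grayWalsh_succ_of_lt hlo, grayWalsh_succ_of_lt hlo, grayWalsh_two_pow_add_right]
      ring
    · obtain ⟨i, rfl⟩ := Nat.exists_eq_add_of_le hhi
      rw [if_neg (by omega)]
      refine Finset.sum_eq_zero fun j hj => ?_
      rw [grayWalsh_succ_two_pow_add_two_pow_add (Finset.mem_range.mp hj),
        grayWalsh_succ_of_lt hlo', grayWalsh_succ_of_lt hlo', grayWalsh_two_pow_add_right]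
      ring
    · obtain ⟨i, rfl⟩ := Nat.exists_eq_add_of_le hhi
      obtain ⟨i', rfl⟩ := Nat.exists_eq_add_of_le hhi'
      simp only [grayWalsh_succ_two_pow_add_mul, grayWalsh_two_pow_add_right, ← two_mul,
        ← Finset.mul_sum, ih (i := i) (i' := i') (by omega) (by omega), add_right_inj]
      split_ifs <;> ring

open Matrix

lemma vvec_eq_bitSign {n m : ℕ} (hm : 1 ≤ m ∧ m ≤ n - 1) (j : Fin (2 ^ (n - 1))) :
    vvec n m j = bitSign (n - 1 - m) j := by
  rw [vvec, dif_pos hm, bitSign, neg_one_pow_eq_pow_mod_two]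
  simp only [castV, kronV, onesV, one_mul, mul_one, Fin.val_cast]
  rcases Nat.mod_two_eq_zero_or_one (j / 2 ^ (n - 1 - m)) with h | h <;> simp [h, signV]

lemma aSeq_succ_eq_map_grayFlips {b : ℕ} (hb : 1 ≤ b) :
    aSeq (b + 1) = (grayFlips b).map (b - ·) := by
  induction b, hb using Nat.le_induction with
  | base => rfl
  | succ b hb ih =>
    obtain ⟨b, rfl⟩ := Nat.exists_eq_add_of_le' hb
    have hshift : (grayFlips (b + 1)).map (b + 1 + 1 - ·) = (aSeq (b + 1 + 1)).map (· + 1) := by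
      rw [ih, List.map_map]
      exact List.map_congr_left fun e he => by have := lt_of_mem_grayFlips he; simp; omega
    rw [grayFlips, List.map_append, List.map_cons, hshift, Nat.add_sub_cancel_left, aSeq,
      List.append_assoc, List.singleton_append]

lemma rMat_eq_grayWalsh {n : ℕ} (hn : 2 ≤ n) (j i : Fin (2 ^ (n - 1))) :
    rMat n j i = grayWalsh (n - 1) i j := by
  obtain ⟨b, rfl⟩ := Nat.exists_eq_add_of_le' (Nat.one_le_of_lt hn)
  have hib : (i : ℕ) < 2 ^ b := i.isLt
  have hi : (i : ℕ) ≤ (aSeq (b + 1)).length := by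
    rw [aSeq_succ_eq_map_grayFlips (by omega), List.length_map, length_grayFlips]; omega
  rw [rMat, prod_range_getD_eq_prod_take (fun m => vvec (b + 1) m j) _ _
      (by rw [ASeq, List.length_append]; omega), ASeq,
    List.take_append_of_le_length hi, aSeq_succ_eq_map_grayFlips (by omega), ← List.map_take,
    List.map_map, grayWalsh, walsh]
  congr 1
  refine List.map_congr_left fun e he => ?_
  have := lt_of_mem_grayFlips (List.mem_of_mem_take he)
  rw [Function.comp_apply, vvec_eq_bitSign (by omega)]
  congr 1
  omega

theorem transpose_mul_rMat {n : ℕ} (hn : 2 ≤ n) :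
    (rMat n)ᵀ * rMat n = (2 ^ (n - 1) : ℝ) • 1 := by
  ext i i'
  rw [mul_apply, Matrix.smul_apply, one_apply, smul_ite, smul_eq_mul, mul_one, smul_zero]
  simp only [transpose_apply, rMat_eq_grayWalsh hn]
  rw [Fin.sum_univ_eq_sum_range (fun j => grayWalsh (n - 1) i j * grayWalsh (n - 1) i' j),
    sum_grayWalsh_mul i.isLt i'.isLt]
  simp only [Fin.val_inj]

section SumDiff

variable {K : Type*} [Field K] {n : ℕ} (hn : 1 ≤ n)

lemma eq_dbl_or_eq_dbl1 (j : Fin (2 ^ n)) : j = dbl hn (half j) ∨ j = dbl1 hn (half j) := by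
  rcases Nat.mod_two_eq_zero_or_one j with h | h
  · exact .inl (Fin.ext (by simp only [dbl, half]; omega))
  · exact .inr (Fin.ext (by simp only [dbl1, half]; omega))

lemma funext_dbl {α : Type*} {f g : Fin (2 ^ n) → α} (h : ∀ i, f (dbl hn i) = g (dbl hn i))
    (h1 : ∀ i, f (dbl1 hn i) = g (dbl1 hn i)) : f = g := by
  funext j
  rcases eq_dbl_or_eq_dbl1 hn j with hj | hj <;> rw [hj]
  exacts [h _, h1 _]

def IsSumDiffMap (R : Matrix (Fin (2 ^ (n - 1))) (Fin (2 ^ (n - 1))) K)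
    (L : (Fin (2 ^ (n - 1)) → K) × (Fin (2 ^ (n - 1)) → K) → (Fin (2 ^ n) → K)) : Prop :=
  ∀ p i, L p (dbl hn i) = p.1 i + (p.2 ᵥ* R) i ∧ L p (dbl1 hn i) = p.1 i - (p.2 ᵥ* R) i

variable {hn} {R : Matrix (Fin (2 ^ (n - 1))) (Fin (2 ^ (n - 1))) K}
  {L : (Fin (2 ^ (n - 1)) → K) × (Fin (2 ^ (n - 1)) → K) → (Fin (2 ^ n) → K)}

lemma IsSumDiffMap.isLinearMap (hL : IsSumDiffMap hn R L) : IsLinearMap K L where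
  map_add p q := funext_dbl hn
    (fun i => by
      simp only [(hL _ i).1, Pi.add_apply, Prod.fst_add, Prod.snd_add, add_vecMul]; ring)
    (fun i => by
      simp only [(hL _ i).2, Pi.add_apply, Prod.fst_add, Prod.snd_add, add_vecMul]; ring)
  map_smul a p := funext_dbl hn
    (fun i => by
      simp only [(hL _ i).1, Pi.smul_apply, Prod.smul_fst, Prod.smul_snd, smul_vecMul, smul_eq_mul]
      ring)
    (fun i => by
      simp only [(hL _ i).2, Pi.smul_apply, Prod.smul_fst, Prod.smul_snd, smul_vecMul, smul_eq_mul]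
      ring)

lemma IsSumDiffMap.eq_of_apply_eq [NeZero (2 : K)] (hL : IsSumDiffMap hn R L) {c : K}
    (hc : c ≠ 0) (hR : R * Rᵀ = c • 1) {ᾱ β : Fin (2 ^ (n - 1)) → K} {α : Fin (2 ^ n) → K}
    (hα : L (ᾱ, β) = α) :
    (∀ i, ᾱ i = (α (dbl hn i) + α (dbl1 hn i)) / 2) ∧
      β = c⁻¹ • ((fun i => (α (dbl hn i) - α (dbl1 hn i)) / 2) ᵥ* Rᵀ) := by
  subst hα
  have hdiff : (fun i => (L (ᾱ, β) (dbl hn i) - L (ᾱ, β) (dbl1 hn i)) / 2) = β ᵥ* R := by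
    funext i; rw [(hL _ i).1, (hL _ i).2]; field_simp; ring
  refine ⟨fun i => ?_, ?_⟩
  · rw [(hL _ i).1, (hL _ i).2]; field_simp; ring
  · rw [hdiff, vecMul_vecMul, hR, vecMul_smul, vecMul_one, smul_smul, inv_mul_cancel₀ hc, one_smul]

lemma IsSumDiffMap.injective [NeZero (2 : K)] (hL : IsSumDiffMap hn R L) {c : K} (hc : c ≠ 0)
    (hR : R * Rᵀ = c • 1) : Function.Injective L := by
  intro p q hpq
  obtain ⟨hp₁, hp₂⟩ := hL.eq_of_apply_eq hc hR (ᾱ := p.1) (β := p.2) hpq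
  obtain ⟨hq₁, hq₂⟩ := hL.eq_of_apply_eq hc hR (ᾱ := q.1) (β := q.2) rfl
  exact Prod.ext (funext fun i => (hp₁ i).trans (hq₁ i).symm) (hp₂.trans hq₂.symm)

lemma IsSumDiffMap.surjective [NeZero (2 : K)] (hL : IsSumDiffMap hn R L) {c : K} (hc : c ≠ 0)
    (hR : Rᵀ * R = c • 1) : Function.Surjective L := by
  intro α
  refine ⟨(fun i => (α (dbl hn i) + α (dbl1 hn i)) / 2,
    c⁻¹ • ((fun i => (α (dbl hn i) - α (dbl1 hn i)) / 2) ᵥ* Rᵀ)), ?_⟩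
  have hdiff : (c⁻¹ • ((fun i => (α (dbl hn i) - α (dbl1 hn i)) / 2) ᵥ* Rᵀ)) ᵥ* R =
      fun i => (α (dbl hn i) - α (dbl1 hn i)) / 2 := by
    rw [smul_vecMul, vecMul_vecMul, hR, vecMul_smul, vecMul_one, smul_smul, inv_mul_cancel₀ hc,
      one_smul]
  refine funext_dbl hn (fun i => ?_) (fun i => ?_)
  · rw [(hL _ i).1, hdiff]; field_simp; ring
  · rw [(hL _ i).2, hdiff]; field_simp; ring

end SumDiff

theorem stmt10 (n : ℕ) (hn : 2 ≤ n)
    (L : (Fin (2 ^ (n - 1)) → ℝ) × (Fin (2 ^ (n - 1)) → ℝ) → (Fin (2 ^ n) → ℝ))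
    (hL : ∀ p : (Fin (2 ^ (n - 1)) → ℝ) × (Fin (2 ^ (n - 1)) → ℝ),
      ∀ i : Fin (2 ^ (n - 1)),
        L p (dbl (by omega) i) = p.1 i + Matrix.vecMul p.2 (rMat n) i ∧
        L p (dbl1 (by omega) i) = p.1 i - Matrix.vecMul p.2 (rMat n) i) :
    IsLinearMap ℝ L ∧ Function.Bijective L ∧
    ∀ (ᾱ β : Fin (2 ^ (n - 1)) → ℝ) (α : Fin (2 ^ n) → ℝ), L (ᾱ, β) = α →
      (∀ i, ᾱ i = (α (dbl (by omega) i) + α (dbl1 (by omega) i)) / 2) ∧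
      β = ((2 : ℝ) ^ (n - 1))⁻¹ •
        Matrix.vecMul (fun i => (α (dbl (by omega) i) - α (dbl1 (by omega) i)) / 2)
          (rMat n)ᵀ := by
  have hSumDiff : IsSumDiffMap (n := n) (by omega) (rMat n) L := hL
  have hc : (2 : ℝ) ^ (n - 1) ≠ 0 := by positivity
  have hcols := transpose_mul_rMat hn
  have hrows := mul_transpose_eq_smul_one hc hcols
  exact ⟨hSumDiff.isLinearMap, ⟨hSumDiff.injective hc hrows, hSumDiff.surjective hc hcols⟩,
    fun _ _ _ => hSumDiff.eq_of_apply_eq hc hrows⟩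

end
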